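/- arXiv:math/0110149 — 4 statements merged into one kernel-verified Lean document; each statement's English description precedes it below -/
import Mathlib

section
/- Let H be a Banach space, L a Banach space, and for z in the open unit disk 𝔻 let r(z) = Σ_{i≥0} r_i z^i be a power series of bounded linear operators H → L with ‖r_i‖ ≤ 1 for all i. Suppose r(0) is surjective with interpolation constant h ≥ 1, meaning: for every v ∈ L with ‖v‖ ≤ 1 there exists u ∈ H with r(0)u = v and ‖u‖ ≤ 2h. Then for every z with |z| < 1/(4h) and every v ∈ L with ‖v‖ ≤ 1, there exists u(z) ∈ H with r(z)(u(z)) = v and ‖u(z)‖ ≤ 8h. -/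
/-!
Since `‖rᵢ‖ ≤ 1`, the operator `r(z)` differs from `r(0)` in norm by at most `|z| / (1 - |z|)`,
which is less than `1 / (3h)` for `|z| < 1 / (4h)`. The interpolation constant gives `r(0)` a
nonlinear right inverse of norm `2h`, and the contraction argument behind the inverse function
theorem shows that a perturbation of size `c < 1 / (2h)` still has preimages with the bound
`(1 / (2h) - c)⁻¹ ≤ 6h`.
-/

open Metric Set

namespace ContinuousLinearMap

section RCLike

variable {𝕜 E F : Type*} [RCLike 𝕜] [NormedAddCommGroup E] [NormedSpace 𝕜 E]
  [NormedAddCommGroup F] [NormedSpace 𝕜 F]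

theorem exists_preimage_norm_le_mul_of_closedBall (f : E →L[𝕜] F) {C : ℝ}
    (hf : ∀ y, ‖y‖ ≤ 1 → ∃ x, f x = y ∧ ‖x‖ ≤ C) (y : F) :
    ∃ x, f x = y ∧ ‖x‖ ≤ C * ‖y‖ := by
  rcases eq_or_ne y 0 with rfl | hy
  · exact ⟨0, map_zero f, by simp⟩
  have hy' : 0 < ‖y‖ := norm_pos_iff.mpr hy
  obtain ⟨x, hfx, hx⟩ := hf ((‖y‖⁻¹ : 𝕜) • y) (by
    rw [norm_smul, norm_inv, RCLike.norm_ofReal, abs_norm, inv_mul_cancel₀ hy'.ne'])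
  refine ⟨(‖y‖ : 𝕜) • x, ?_, ?_⟩
  · rw [map_smul, hfx, smul_inv_smul₀ (RCLike.ofReal_ne_zero.mpr hy'.ne')]
  · rw [norm_smul, RCLike.norm_ofReal, abs_norm, mul_comm]
    exact mul_le_mul_of_nonneg_right hx hy'.le

noncomputable def NonlinearRightInverse.ofClosedBall (f : E →L[𝕜] F) (C : NNReal)
    (hf : ∀ y, ‖y‖ ≤ 1 → ∃ x, f x = y ∧ ‖x‖ ≤ C) : f.NonlinearRightInverse where
  toFun y := (f.exists_preimage_norm_le_mul_of_closedBall hf y).choose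
  nnnorm := C
  bound' y := (f.exists_preimage_norm_le_mul_of_closedBall hf y).choose_spec.2
  right_inv' y := (f.exists_preimage_norm_le_mul_of_closedBall hf y).choose_spec.1

end RCLike

variable {𝕜 E F : Type*} [NontriviallyNormedField 𝕜] [NormedAddCommGroup E] [NormedSpace 𝕜 E]
  [NormedAddCommGroup F] [NormedSpace 𝕜 F]

theorem approximatesLinearOn_univ (A B : E →L[𝕜] F) : ApproximatesLinearOn B A univ ‖B - A‖₊ := by
  intro x _ y _
  rw [← map_sub, ← sub_apply, coe_nnnorm]
  exact le_opNorm _ _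

theorem NonlinearRightInverse.exists_preimage_of_norm_sub_lt [CompleteSpace E] {A : E →L[𝕜] F}
    (g : A.NonlinearRightInverse) (B : E →L[𝕜] F) (hB : ‖B - A‖ < (g.nnnorm : ℝ)⁻¹) (y : F) :
    ∃ x, B x = y ∧ ‖x‖ ≤ ‖y‖ / ((g.nnnorm : ℝ)⁻¹ - ‖B - A‖) := by
  have hgap : 0 < (g.nnnorm : ℝ)⁻¹ - ‖B - A‖ := sub_pos.mpr hB
  have hsurj := (approximatesLinearOn_univ A B).surjOn_closedBall_of_nonlinearRightInverse g
    (b := 0) (div_nonneg (norm_nonneg y) hgap.le) (subset_univ _)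
  obtain ⟨x, hx, hBx⟩ := hsurj (by
    rw [mem_closedBall, map_zero, dist_zero_right, coe_nnnorm, mul_div_cancel₀ _ hgap.ne'])
  exact ⟨x, hBx, by simpa using hx⟩

end ContinuousLinearMap

section PowerSeries

variable {𝕜 E : Type*} [NormedField 𝕜] [NormedAddCommGroup E] [NormedSpace 𝕜 E]
  {a : ℕ → E} {M : ℝ} {z : 𝕜}

theorem norm_pow_smul_le (ha : ∀ i, ‖a i‖ ≤ M) (i : ℕ) : ‖z ^ i • a i‖ ≤ M * ‖z‖ ^ i := by
  rw [norm_smul, norm_pow, mul_comm]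
  exact mul_le_mul_of_nonneg_right (ha i) (by positivity)

variable [CompleteSpace E]

theorem summable_pow_smul (ha : ∀ i, ‖a i‖ ≤ M) (hz : ‖z‖ < 1) :
    Summable fun i ↦ z ^ i • a i :=
  .of_norm_bounded ((summable_geometric_of_lt_one (norm_nonneg z) hz).mul_left M)
    (norm_pow_smul_le ha)

theorem norm_tsum_pow_smul_sub_le (ha : ∀ i, ‖a i‖ ≤ M) (hz : ‖z‖ < 1) :
    ‖∑' i, z ^ i • a i - a 0‖ ≤ M * ‖z‖ / (1 - ‖z‖) := by
  have htail : HasSum (fun i ↦ M * ‖z‖ ^ (i + 1)) (M * ‖z‖ / (1 - ‖z‖)) := by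
    simpa only [pow_succ', mul_assoc, div_eq_mul_inv] using
      (hasSum_geometric_of_lt_one (norm_nonneg z) hz).mul_left (M * ‖z‖)
  rw [(summable_pow_smul ha hz).tsum_eq_zero_add, pow_zero, one_smul, add_sub_cancel_left]
  exact tsum_of_norm_bounded htail fun i ↦ norm_pow_smul_le ha (i + 1)

end PowerSeries

/-- If `r(z) = Σ rᵢ zⁱ` is a power series of operators `H → L` with `‖rᵢ‖ ≤ 1`, and `r 0`
is surjective with interpolation constant `h ≥ 1` (every `v` with `‖v‖ ≤ 1` has a preimage
of norm `≤ 2h`), then for `|z| < 1/(4h)` every `v` with `‖v‖ ≤ 1` has a preimage under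
`r z` of norm `≤ 8h`. -/
theorem stmt_6 (H L : Type*) [NormedAddCommGroup H] [NormedSpace ℂ H] [CompleteSpace H]
    [NormedAddCommGroup L] [NormedSpace ℂ L] [CompleteSpace L]
    (r : ℕ → (H →L[ℂ] L)) (hr : ∀ i, ‖r i‖ ≤ 1)
    (h : ℝ) (hh : 1 ≤ h)
    (h0 : ∀ v : L, ‖v‖ ≤ 1 → ∃ u : H, r 0 u = v ∧ ‖u‖ ≤ 2 * h) :
    ∀ z : ℂ, ‖z‖ < 1 / (4 * h) → ∀ v : L, ‖v‖ ≤ 1 →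
      ∃ u : H, (∑' i : ℕ, z ^ i • r i u) = v ∧ ‖u‖ ≤ 8 * h := by
  intro z hz v hv
  have hpos : 0 < h := by linarith
  have hz4 : ‖z‖ ≤ 1 / 4 := hz.le.trans (by gcongr; linarith)
  let g := ContinuousLinearMap.NonlinearRightInverse.ofClosedBall (r 0) ⟨2 * h, by positivity⟩ h0
  have hg : (g.nnnorm : ℝ)⁻¹ = 1 / (2 * h) := (one_div _).symm
  have hclose : ‖∑' i, z ^ i • r i - r 0‖ ≤ 1 / (3 * h) := calc
    _ ≤ 1 * ‖z‖ / (1 - ‖z‖) := norm_tsum_pow_smul_sub_le hr (by linarith)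
    _ ≤ 1 / (4 * h) / (3 / 4) := by gcongr <;> linarith
    _ = 1 / (3 * h) := by field_simp
  obtain ⟨u, hu, hnorm⟩ := g.exists_preimage_of_norm_sub_lt (∑' i, z ^ i • r i)
    (by rw [hg]; exact hclose.trans_lt (by gcongr; linarith)) v
  refine ⟨u, ?_, ?_⟩
  · rw [← hu]
    exact ((ContinuousLinearMap.apply ℂ L u).map_tsum (summable_pow_smul hr (by linarith))).symm
  · have hgap : 0 < 1 / (2 * h) - 1 / (3 * h) := by rw [sub_pos]; gcongr; linarith
    calc ‖u‖ ≤ ‖v‖ / ((g.nnnorm : ℝ)⁻¹ - ‖∑' i, z ^ i • r i - r 0‖) := hnorm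
    _ ≤ 1 / (1 / (2 * h) - 1 / (3 * h)) := by rw [hg]; gcongr
    _ = 6 * h := by field_simp; ring
    _ ≤ 8 * h := by linarith
end

section
/- For the pseudohyperbolic metric ρ(z,w) = |(z−w)/(1−z̄w)| on the open unit disk, if ρ(z,z') ≤ λ and ρ(w,w') ≤ λ with 0 < λ < 1, and α = 2λ/(1+λ²), then ρ(z',w') ≥ (ρ(z,w) − α)/(1 − α ρ(z,w)). -/
/-!
Writing `ρ = tanh d`, the strong triangle inequality
`ρ(z, w) ≤ (ρ(z, u) + ρ(u, w)) / (1 + ρ(z, u) ρ(u, w))` is the triangle inequality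
for `d`. With `λ = tanh δ`, going along `z, z', w', w` gives `d(z, w) ≤ 2δ + d(z', w')`, and
`α = tanh 2δ`; applying `tanh` and solving for `ρ(z', w')` gives the claim.
By invariance of `ρ` under the disc automorphism `z ↦ (u - z) / (1 - ū z)`, the strong
triangle inequality reduces to the case `u = 0`, where it follows from `‖a - b‖ ≤ ‖a‖ + ‖b‖`.
-/

open ComplexConjugate

namespace PseudoHyperbolic

/-- `tanh (x + y) = tanhAdd (tanh x) (tanh y)` -/
noncomputable def tanhAdd (s t : ℝ) : ℝ := (s + t) / (1 + s * t)

lemma tanhAdd_comm (s t : ℝ) : tanhAdd s t = tanhAdd t s := by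
  rw [tanhAdd, tanhAdd, add_comm, mul_comm]

lemma tanhAdd_self (s : ℝ) : tanhAdd s s = 2 * s / (1 + s ^ 2) := by
  rw [tanhAdd, two_mul, sq]

lemma tanhAdd_nonneg {s t : ℝ} (hs : 0 ≤ s) (ht : 0 ≤ t) : 0 ≤ tanhAdd s t := by
  unfold tanhAdd; positivity

lemma tanhAdd_le_one {s t : ℝ} (hs0 : 0 ≤ s) (hs1 : s ≤ 1) (ht0 : 0 ≤ t) (ht1 : t ≤ 1) :
    tanhAdd s t ≤ 1 := by
  rw [tanhAdd, div_le_one (by positivity)]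
  nlinarith [mul_nonneg (sub_nonneg.2 hs1) (sub_nonneg.2 ht1)]

lemma tanhAdd_assoc {a b c : ℝ} (ha : 0 ≤ a) (hb : 0 ≤ b) (hc : 0 ≤ c) :
    tanhAdd (tanhAdd a b) c = tanhAdd a (tanhAdd b c) := by
  have hab : 0 < 1 + a * b := by positivity
  have hbc : 0 < 1 + b * c := by positivity
  have habc : 0 < 1 + a * b + a * c + b * c := by positivity
  unfold tanhAdd
  field_simp
  ring

lemma tanhAdd_le_tanhAdd_left {s s' t : ℝ} (hs : 0 ≤ s) (hss' : s ≤ s') (ht0 : 0 ≤ t)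
    (ht1 : t ≤ 1) : tanhAdd s t ≤ tanhAdd s' t := by
  rw [tanhAdd, tanhAdd, div_le_div_iff₀ (by positivity) (by nlinarith)]
  nlinarith [mul_nonneg (sub_nonneg.2 hss')
    (mul_nonneg (sub_nonneg.2 ht1) (by linarith : 0 ≤ 1 + t))]

lemma tanhAdd_le_tanhAdd_right {s t t' : ℝ} (hs0 : 0 ≤ s) (hs1 : s ≤ 1) (ht : 0 ≤ t)
    (htt' : t ≤ t') : tanhAdd s t ≤ tanhAdd s t' := by
  rw [tanhAdd_comm s, tanhAdd_comm s]
  exact tanhAdd_le_tanhAdd_left ht htt' hs0 hs1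

lemma sub_div_one_sub_mul_le_of_le_tanhAdd {r s t : ℝ} (hs : 0 ≤ s) (ht : 0 ≤ t)
    (hsr : s * r < 1) (hr : r ≤ tanhAdd s t) : (r - s) / (1 - s * r) ≤ t := by
  rw [tanhAdd, le_div_iff₀ (by positivity)] at hr
  rw [div_le_iff₀ (sub_pos.2 hsr)]
  linarith

lemma norm_one_sub_conj_mul_sq (a b : ℂ) :
    ‖1 - conj a * b‖ ^ 2 = ‖a - b‖ ^ 2 + (1 - ‖a‖ ^ 2) * (1 - ‖b‖ ^ 2) := by
  simp only [Complex.sq_norm, Complex.normSq_sub, Complex.normSq_one,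
    Complex.normSq_conj, map_mul, Complex.conj_conj, one_mul]
  ring

lemma one_sub_conj_mul_ne_zero {a b : ℂ} (ha : ‖a‖ < 1) (hb : ‖b‖ < 1) :
    1 - conj a * b ≠ 0 := by
  intro h
  have key := norm_one_sub_conj_mul_sq a b
  rw [h, norm_zero] at key
  have : 0 < (1 - ‖a‖ ^ 2) * (1 - ‖b‖ ^ 2) := by
    apply mul_pos <;> nlinarith [norm_nonneg a, norm_nonneg b]
  nlinarith [sq_nonneg ‖a - b‖]

noncomputable def pseudoDist (z w : ℂ) : ℝ := ‖(z - w) / (1 - conj z * w)‖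

lemma pseudoDist_nonneg (z w : ℂ) : 0 ≤ pseudoDist z w := norm_nonneg _

lemma pseudoDist_comm (z w : ℂ) : pseudoDist z w = pseudoDist w z := by
  have hconj : 1 - conj w * z = conj (1 - conj z * w) := by simp [mul_comm]
  rw [pseudoDist, pseudoDist, norm_div, norm_div, norm_sub_rev, hconj, Complex.norm_conj]

lemma pseudoDist_lt_one {z w : ℂ} (hz : ‖z‖ < 1) (hw : ‖w‖ < 1) : pseudoDist z w < 1 := by
  rw [pseudoDist, norm_div, div_lt_one (norm_pos_iff.2 (one_sub_conj_mul_ne_zero hz hw))]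
  refine lt_of_pow_lt_pow_left₀ 2 (norm_nonneg _) ?_
  rw [norm_one_sub_conj_mul_sq]
  have : 0 < (1 - ‖z‖ ^ 2) * (1 - ‖w‖ ^ 2) := by
    apply mul_pos <;> nlinarith [norm_nonneg z, norm_nonneg w]
  linarith

lemma pseudoDist_le_tanhAdd_norm {a b : ℂ} (ha : ‖a‖ < 1) (hb : ‖b‖ < 1) :
    pseudoDist a b ≤ tanhAdd ‖a‖ ‖b‖ := by
  have hr := norm_nonneg a
  have hs := norm_nonneg b
  rw [pseudoDist, tanhAdd, norm_div,
    div_le_div_iff₀ (norm_pos_iff.2 (one_sub_conj_mul_ne_zero ha hb)) (by positivity)]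
  refine le_of_pow_le_pow_left₀ two_ne_zero (by positivity) ?_
  rw [mul_pow, mul_pow, norm_one_sub_conj_mul_sq]
  have htri : ‖a - b‖ ^ 2 ≤ (‖a‖ + ‖b‖) ^ 2 := by
    gcongr
    exact norm_sub_le a b
  have : 0 ≤ (1 - ‖a‖ ^ 2) * (1 - ‖b‖ ^ 2) := by
    apply mul_nonneg <;> nlinarith
  -- `(1 + rs)² - (r + s)² = (1 - r²)(1 - s²)`
  nlinarith [mul_le_mul_of_nonneg_right htri this]

noncomputable def mobius (u z : ℂ) : ℂ := (u - z) / (1 - conj u * z)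

lemma norm_mobius (u z : ℂ) : ‖mobius u z‖ = pseudoDist u z := rfl

lemma pseudoDist_mobius {u z w : ℂ} (hu : ‖u‖ < 1) (hz : ‖z‖ < 1) (hw : ‖w‖ < 1) :
    pseudoDist (mobius u z) (mobius u w) = pseudoDist z w := by
  have huz := one_sub_conj_mul_ne_zero hu hz
  have huw := one_sub_conj_mul_ne_zero hu hw
  have hzw := one_sub_conj_mul_ne_zero hz hw
  have huu := one_sub_conj_mul_ne_zero hu hu
  have hzu : 1 - u * conj z ≠ 0 := by
    simpa [mul_comm] using (map_ne_zero conj).2 huz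
  have key : (mobius u z - mobius u w) / (1 - conj (mobius u z) * mobius u w) =
      (w - z) / (1 - conj z * w) * (conj (1 - conj u * z) / (1 - conj u * z)) := by
    have hden : (1 - u * conj z) * (1 - conj u * w) - (conj u - conj z) * (u - w) =
        (1 - conj u * u) * (1 - conj z * w) := by ring
    simp only [mobius, map_div₀, map_sub, map_mul, map_one, Complex.conj_conj]
    rw [div_sub_div _ _ huz huw, div_mul_div_comm, one_sub_div (mul_ne_zero hzu huw), hden,
      div_div_div_eq, div_mul_div_comm,
      div_eq_div_iff (mul_ne_zero (mul_ne_zero huz huw) (mul_ne_zero huu hzw))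
        (mul_ne_zero hzw huz)]
    ring
  rw [pseudoDist, key, norm_mul, norm_div (conj _), Complex.norm_conj,
    div_self (norm_ne_zero_iff.2 huz), mul_one, norm_div, norm_sub_rev, pseudoDist, norm_div]

lemma pseudoDist_le_tanhAdd {z u w : ℂ} (hz : ‖z‖ < 1) (hu : ‖u‖ < 1) (hw : ‖w‖ < 1) :
    pseudoDist z w ≤ tanhAdd (pseudoDist z u) (pseudoDist u w) := by
  rw [← pseudoDist_mobius hu hz hw, pseudoDist_comm z u, ← norm_mobius, ← norm_mobius]
  apply pseudoDist_le_tanhAdd_norm <;> rw [norm_mobius] <;> exact pseudoDist_lt_one hu ‹_›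

end PseudoHyperbolic

open PseudoHyperbolic

/-- For the pseudohyperbolic metric `ρ(z,w) = |(z-w)/(1-z̄w)|` on the unit disk: if
`ρ(z,z') ≤ λ`, `ρ(w,w') ≤ λ` with `0 < λ < 1` and `α = 2λ/(1+λ²)`, then
`ρ(z',w') ≥ (ρ(z,w) - α)/(1 - α ρ(z,w))`. -/
theorem stmt_9 (ρ : ℂ → ℂ → ℝ)
    (hρ : ∀ z w : ℂ, ρ z w = ‖(z - w) / (1 - (starRingEnd ℂ) z * w)‖)
    (z z' w w' : ℂ)
    (hz : ‖z‖ < 1) (hz' : ‖z'‖ < 1)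
    (hw : ‖w‖ < 1) (hw' : ‖w'‖ < 1)
    (lam : ℝ) (hlam0 : 0 < lam) (hlam1 : lam < 1)
    (alpha : ℝ) (halpha : alpha = 2 * lam / (1 + lam ^ 2))
    (h1 : ρ z z' ≤ lam) (h2 : ρ w w' ≤ lam) :
    (ρ z w - alpha) / (1 - alpha * ρ z w) ≤ ρ z' w' := by
  obtain rfl : ρ = pseudoDist := funext₂ hρ
  rw [← tanhAdd_self] at halpha
  subst halpha
  have hlam := hlam0.le
  have hz'w' := pseudoDist_nonneg z' w'
  have hzw_le : pseudoDist z w ≤ tanhAdd (tanhAdd lam lam) (pseudoDist z' w') := calc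
    pseudoDist z w ≤ tanhAdd (pseudoDist z z') (pseudoDist z' w) :=
      pseudoDist_le_tanhAdd hz hz' hw
    _ ≤ tanhAdd lam (pseudoDist z' w) :=
      tanhAdd_le_tanhAdd_left (pseudoDist_nonneg _ _) h1 (pseudoDist_nonneg _ _)
        (pseudoDist_lt_one hz' hw).le
    _ ≤ tanhAdd lam (tanhAdd (pseudoDist z' w') (pseudoDist w' w)) :=
      tanhAdd_le_tanhAdd_right hlam hlam1.le (pseudoDist_nonneg _ _)
        (pseudoDist_le_tanhAdd hz' hw' hw)
    _ ≤ tanhAdd lam (tanhAdd (pseudoDist z' w') lam) :=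
      tanhAdd_le_tanhAdd_right hlam hlam1.le (tanhAdd_nonneg hz'w' (pseudoDist_nonneg _ _)) <|
        tanhAdd_le_tanhAdd_right hz'w' (pseudoDist_lt_one hz' hw').le (pseudoDist_nonneg _ _)
          (by rwa [pseudoDist_comm])
    _ = tanhAdd (tanhAdd lam lam) (pseudoDist z' w') := by
      rw [tanhAdd_comm _ lam, tanhAdd_assoc hlam hlam hz'w']
  have hα1 := tanhAdd_le_one hlam hlam1.le hlam hlam1.le
  have hzw := pseudoDist_lt_one hz hw
  exact sub_div_one_sub_mul_le_of_le_tanhAdd (tanhAdd_nonneg hlam hlam) hz'w'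
    (by nlinarith [pseudoDist_nonneg z w]) hzw_le
end

section
/- Let 0 < α < 1 and let (a_j)_{j∈J} be a family of real numbers with α ≤ a_j ≤ 1 for all j and Π_j a_j ≥ δ > α. Then Π_j (a_j − α)/(1 − α a_j) ≥ (δ − α)/(1 − α δ). -/
open Filter

private lemma f_nonneg {alpha x : ℝ} (h0 : 0 ≤ alpha) (h1 : alpha < 1)
    (hx : alpha ≤ x) (hx1 : x ≤ 1) : 0 ≤ (x - alpha) / (1 - alpha * x) := by
  apply div_nonneg (by linarith)
  nlinarith

private lemma f_mono {alpha x y : ℝ} (h0 : 0 ≤ alpha) (h1 : alpha < 1)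
    (hx : alpha ≤ x) (hxy : x ≤ y) (hy1 : y ≤ 1) :
    (x - alpha) / (1 - alpha * x) ≤ (y - alpha) / (1 - alpha * y) := by
  have hdy : 0 < 1 - alpha * y := by nlinarith
  have hdx : 0 < 1 - alpha * x := by nlinarith
  rw [div_le_div_iff₀ hdx hdy]
  nlinarith [mul_nonneg (sub_nonneg.2 hxy) (show (0:ℝ) ≤ 1 - alpha * alpha by nlinarith)]

private lemma f_submul {alpha x y : ℝ} (h0 : 0 ≤ alpha) (h1 : alpha < 1)
    (hx : alpha ≤ x) (hx1 : x ≤ 1) (hy : alpha ≤ y) (hy1 : y ≤ 1) :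
    (x * y - alpha) / (1 - alpha * (x * y)) ≤
      (x - alpha) / (1 - alpha * x) * ((y - alpha) / (1 - alpha * y)) := by
  have hdx : 0 < 1 - alpha * x := by nlinarith
  have hdy : 0 < 1 - alpha * y := by nlinarith
  have hxy0 : 0 ≤ x * y := mul_nonneg (le_trans h0 hx) (le_trans h0 hy)
  have hxy1 : x * y ≤ 1 := mul_le_one₀ hx1 (le_trans h0 hy) hy1
  have hdxy : 0 < 1 - alpha * (x * y) := by nlinarith
  rw [div_mul_div_comm, div_le_div_iff₀ hdxy (by positivity)]
  nlinarith [mul_nonneg (mul_nonneg h0 (sub_nonneg.2 hx1)) (sub_nonneg.2 hy1),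
    mul_nonneg (mul_nonneg (mul_nonneg h0 h0) (sub_nonneg.2 hx1)) (sub_nonneg.2 hy1),
    sub_nonneg.2 (mul_le_one₀ hx1 (le_trans h0 hy) hy1)]

/-- If `0 < α < 1`, `α ≤ a_j ≤ 1` for all `j` in a countable index set, and
`Π_j a_j ≥ δ > α`, then `Π_j (a_j - α)/(1 - α a_j) ≥ (δ - α)/(1 - α δ)`. -/
theorem stmt_10 (J : Type*) [Countable J] (a : J → ℝ) (alpha delta : ℝ)
    (h0 : 0 < alpha) (h1 : alpha < 1)
    (ha : ∀ j, alpha ≤ a j ∧ a j ≤ 1)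
    (hδ : alpha < delta)
    (hprod : delta ≤ ∏' j, a j) :
    (delta - alpha) / (1 - alpha * delta) ≤ ∏' j, (a j - alpha) / (1 - alpha * a j) := by
  classical
  set g : J → ℝ := fun j => (a j - alpha) / (1 - alpha * a j) with hg
  have ha0 : ∀ j, 0 ≤ a j := fun j => le_trans h0.le (ha j).1
  have hg0 : ∀ j, 0 ≤ g j := fun j => f_nonneg h0.le h1 (ha j).1 (ha j).2
  have hg1 : ∀ j, g j ≤ 1 := by
    intro j
    have hd : 0 < 1 - alpha * a j := by nlinarith [(ha j).1, (ha j).2]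
    rw [div_le_one hd]
    nlinarith [(ha j).1, (ha j).2]
  -- partial products
  set P : Finset J → ℝ := fun s => ∏ j ∈ s, a j with hP
  set Q : Finset J → ℝ := fun s => ∏ j ∈ s, g j with hQ
  have anti : ∀ (b : J → ℝ), (∀ j, 0 ≤ b j) → (∀ j, b j ≤ 1) →
      Antitone (fun s : Finset J => ∏ j ∈ s, b j) := by
    intro b hb0 hb1 s t hst
    have := Finset.prod_sdiff hst (f := b)
    dsimp only
    rw [← this]
    have h1' : ∏ j ∈ t \ s, b j ≤ 1 :=
      Finset.prod_le_one (fun i _ => hb0 i) (fun i _ => hb1 i)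
    have h0' : 0 ≤ ∏ j ∈ s, b j := Finset.prod_nonneg fun i _ => hb0 i
    nlinarith
  have hPanti : Antitone P := anti a ha0 (fun j => (ha j).2)
  have hQanti : Antitone Q := anti g hg0 hg1
  have hPbdd : BddBelow (Set.range P) := by
    refine ⟨0, ?_⟩
    rintro x ⟨s, rfl⟩
    exact Finset.prod_nonneg fun i _ => ha0 i
  have hQbdd : BddBelow (Set.range Q) := by
    refine ⟨0, ?_⟩
    rintro x ⟨s, rfl⟩
    exact Finset.prod_nonneg fun i _ => hg0 i
  have hPa : HasProd a (⨅ s, P s) := tendsto_atTop_ciInf hPanti hPbdd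
  have hQa : HasProd g (⨅ s, Q s) := tendsto_atTop_ciInf hQanti hQbdd
  have htpa : ∏' j, a j = ⨅ s, P s := hPa.tprod_eq
  have htqa : ∏' j, g j = ⨅ s, Q s := hQa.tprod_eq
  -- every partial product of a is ≥ delta
  have hPs : ∀ s : Finset J, delta ≤ P s := by
    intro s
    calc delta ≤ ∏' j, a j := hprod
    _ = ⨅ s, P s := htpa
    _ ≤ P s := ciInf_le hPbdd s
  have hPle1 : ∀ s : Finset J, P s ≤ 1 :=
    fun s => Finset.prod_le_one (fun i _ => ha0 i) (fun i _ => (ha i).2)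
  -- finite product inequality
  have key : ∀ s : Finset J, (P s - alpha) / (1 - alpha * P s) ≤ Q s := by
    intro s
    classical
    induction s using Finset.induction with
    | empty =>
      simp only [hP, hQ, Finset.prod_empty]
      rw [div_le_one (by linarith)]
      linarith
    | @insert j s hj ih =>
      have hPins : P (insert j s) = a j * P s := by
        simp [hP, Finset.prod_insert hj]
      have hQins : Q (insert j s) = g j * Q s := by
        simp [hQ, Finset.prod_insert hj]
      have hPsα : alpha ≤ P s := le_trans hδ.le (hPs s)
      rw [hPins, hQins]
      calc (a j * P s - alpha) / (1 - alpha * (a j * P s))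
          ≤ g j * ((P s - alpha) / (1 - alpha * P s)) :=
            f_submul h0.le h1 (ha j).1 (ha j).2 hPsα (hPle1 s)
        _ ≤ g j * Q s := by
            exact mul_le_mul_of_nonneg_left ih (hg0 j)
  rw [htqa]
  apply le_ciInf
  intro s
  calc (delta - alpha) / (1 - alpha * delta)
      ≤ (P s - alpha) / (1 - alpha * P s) :=
        f_mono h0.le h1 hδ.le (hPs s) (hPle1 s)
    _ ≤ Q s := key s
end

section
/- Let (P_j)_{j} be a family of functions P_j : U → [0,1] on a set U, and (z_j) ⊂ U with P_j(z_k) = P_k(z_j), P_j(z_j) = 0, and inf_n Π_{j≠n} P_j(z_n) ≥ δ > 0. Then the sequence splits into two disjoint subsequences (z_{1j}) and (z_{2j}) such that for s = 1,2 and every n, the product over the subsequence containing z_n of P at z_n (omitting the index of z_n itself) is at least √δ. -/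
open Filter Finset

lemma prod_anti01 {ι : Type*} {a : ι → ℝ} (h0 : ∀ i, 0 ≤ a i) (h1 : ∀ i, a i ≤ 1)
    {F G : Finset ι} (hFG : F ⊆ G) : ∏ i ∈ G, a i ≤ ∏ i ∈ F, a i := by
  classical
  rw [← Finset.prod_sdiff hFG]
  exact mul_le_of_le_one_left (Finset.prod_nonneg fun i _ => h0 i)
    (Finset.prod_le_one (fun i _ => h0 i) (fun i _ => h1 i))

lemma hasProd_of_le_one {ι : Type*} (a : ι → ℝ) (h0 : ∀ i, 0 ≤ a i) (h1 : ∀ i, a i ≤ 1) :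
    HasProd a (⨅ F : Finset ι, ∏ i ∈ F, a i) := by
  have hanti : Antitone (fun F : Finset ι => ∏ i ∈ F, a i) :=
    fun F G h => prod_anti01 h0 h1 h
  have hbdd : BddBelow (Set.range fun F : Finset ι => ∏ i ∈ F, a i) :=
    ⟨0, by rintro x ⟨F, rfl⟩; exact Finset.prod_nonneg fun i _ => h0 i⟩
  exact tendsto_atTop_ciInf hanti hbdd

lemma le_tprod_of_le_finprods {ι : Type*} (a : ι → ℝ) (h0 : ∀ i, 0 ≤ a i) (h1 : ∀ i, a i ≤ 1)
    {c : ℝ} (h : ∀ F : Finset ι, c ≤ ∏ i ∈ F, a i) : c ≤ ∏' i, a i := by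
  rw [(hasProd_of_le_one a h0 h1).tprod_eq]
  exact le_ciInf h

lemma finprod_le_of_le_tprod {ι : Type*} (a : ι → ℝ) (h0 : ∀ i, 0 ≤ a i) (h1 : ∀ i, a i ≤ 1)
    {c : ℝ} (h : c ≤ ∏' i, a i) (F : Finset ι) : c ≤ ∏ i ∈ F, a i := by
  rw [(hasProd_of_le_one a h0 h1).tprod_eq] at h
  exact h.trans (ciInf_le ⟨0, by rintro x ⟨G, rfl⟩; exact Finset.prod_nonneg fun i _ => h0 i⟩ F)

lemma core_lemma (w : ℕ → ℕ → ℝ) (hsymw : ∀ j k, w j k = w k j)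
    (delta : ℝ) (hδ : 0 < delta)
    (hrow : ∀ n (G : Finset ℕ), n ∉ G → delta ≤ ∏ j ∈ G, w j n)
    (T S : Finset ℕ) (hST : S ⊆ T)
    (hmin : ∀ S' ∈ T.powerset, (∏ j ∈ S, ∏ k ∈ T \ S, w j k) ≤ ∏ j ∈ S', ∏ k ∈ T \ S', w j k)
    (n : ℕ) (hn : n ∈ S) :
    Real.sqrt delta ≤ ∏ j ∈ S.erase n, w j n := by
  classical
  have hpos : ∀ j k : ℕ, j ≠ k → 0 < w j k := fun j k hjk =>
    lt_of_lt_of_le hδ (by simpa using hrow k {j} (by simp [Ne.symm hjk]))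
  set B := ∏ j ∈ S.erase n, ∏ k ∈ T \ S, w j k with hB
  set intn := ∏ j ∈ S.erase n, w j n with hint
  set extn := ∏ k ∈ T \ S, w n k with hext
  have hnT : n ∈ T := hST hn
  have hfS : (∏ j ∈ S, ∏ k ∈ T \ S, w j k) = extn * B := by
    rw [← Finset.mul_prod_erase S _ hn]
  have hTerase : T \ S.erase n = insert n (T \ S) := by
    ext k
    simp only [Finset.mem_sdiff, Finset.mem_erase, Finset.mem_insert]
    constructor
    · rintro ⟨hkT, hk⟩
      by_cases hkn : k = n
      · exact Or.inl hkn
      · exact Or.inr ⟨hkT, fun hkS => hk ⟨hkn, hkS⟩⟩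
    · rintro (rfl | ⟨hkT, hkS⟩)
      · exact ⟨hnT, fun h => h.1 rfl⟩
      · exact ⟨hkT, fun h => hkS h.2⟩
  have hfS' : (∏ j ∈ S.erase n, ∏ k ∈ T \ S.erase n, w j k) = intn * B := by
    rw [hTerase, ← Finset.prod_mul_distrib]
    refine Finset.prod_congr rfl fun j hj => ?_
    rw [Finset.prod_insert (by simp [hn])]
  have hBpos : 0 < B := by
    refine Finset.prod_pos fun j hj => Finset.prod_pos fun k hk => ?_
    exact hpos j k (by rintro rfl; exact (Finset.mem_sdiff.1 hk).2 (Finset.mem_of_mem_erase hj))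
  have hle : extn ≤ intn := by
    have := hmin (S.erase n) (Finset.mem_powerset.2 ((Finset.erase_subset _ _).trans hST))
    rw [hfS, hfS'] at this
    exact le_of_mul_le_mul_right this hBpos
  have hunion : (S.erase n) ∪ (T \ S) = T.erase n := by
    ext k
    simp only [Finset.mem_union, Finset.mem_erase, Finset.mem_sdiff]
    constructor
    · rintro (⟨hkn, hkS⟩ | ⟨hkT, hkS⟩)
      · exact ⟨hkn, hST hkS⟩
      · exact ⟨fun h => hkS (h ▸ hn), hkT⟩
    · rintro ⟨hkn, hkT⟩
      by_cases hkS : k ∈ S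
      · exact Or.inl ⟨hkn, hkS⟩
      · exact Or.inr ⟨hkT, hkS⟩
  have hdisj : Disjoint (S.erase n) (T \ S) :=
    Finset.disjoint_left.2 fun k hk hk' => (Finset.mem_sdiff.1 hk').2 (Finset.mem_of_mem_erase hk)
  have hprod : intn * extn = ∏ j ∈ T.erase n, w j n := by
    rw [← hunion, Finset.prod_union hdisj]
    congr 1
    exact Finset.prod_congr rfl fun k _ => hsymw n k
  have hintnn : 0 ≤ intn :=
    Finset.prod_nonneg fun j hj => (hpos j n (Finset.ne_of_mem_erase hj)).le
  have hδle : delta ≤ intn ^ 2 := by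
    have h1' : delta ≤ intn * extn := hprod ▸ hrow n (T.erase n) (by simp)
    calc delta ≤ intn * extn := h1'
    _ ≤ intn * intn := by
        rcases eq_or_lt_of_le hintnn with h | h
        · nlinarith
        · exact mul_le_mul_of_nonneg_left hle hintnn
    _ = intn ^ 2 := by ring
  calc Real.sqrt delta ≤ Real.sqrt (intn ^ 2) := Real.sqrt_le_sqrt hδle
  _ = intn := by rw [Real.sqrt_sq hintnn]

/-- Splitting of interpolating sequences: if `P_j : U → [0,1]` satisfy the symmetry
`P_j(z_k) = P_k(z_j)`, `P_j(z_j) = 0` and `Π_{j≠n} P_j(z_n) ≥ δ > 0` for all `n`, then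
the sequence splits into two disjoint subsequences each with characteristic `≥ √δ`. -/
theorem stmt_12 (U : Type*) (P : ℕ → U → ℝ) (z : ℕ → U) (delta : ℝ) (hδ : 0 < delta)
    (hP01 : ∀ j x, 0 ≤ P j x ∧ P j x ≤ 1)
    (hsym : ∀ j k, P j (z k) = P k (z j))
    (hdiag : ∀ j, P j (z j) = 0)
    (hchar : ∀ n, delta ≤ ∏' j : {j : ℕ // j ≠ n}, P j (z n)) :
    ∃ S : Set ℕ,
      (∀ n ∈ S, Real.sqrt delta ≤ ∏' j : {j : ℕ // j ∈ S ∧ j ≠ n}, P j (z n)) ∧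
      (∀ n ∉ S, Real.sqrt delta ≤ ∏' j : {j : ℕ // j ∉ S ∧ j ≠ n}, P j (z n)) := by
  classical
  set w : ℕ → ℕ → ℝ := fun j k => P j (z k) with hw
  have hsymw : ∀ j k, w j k = w k j := fun j k => hsym j k
  have h0w : ∀ j k, 0 ≤ w j k := fun j k => (hP01 j (z k)).1
  have h1w : ∀ j k, w j k ≤ 1 := fun j k => (hP01 j (z k)).2
  -- row bound on finite products
  have hrow : ∀ n (G : Finset ℕ), n ∉ G → delta ≤ ∏ j ∈ G, w j n := by
    intro n G hnG
    have hfin := finprod_le_of_le_tprod (fun j : {j : ℕ // j ≠ n} => P j.1 (z n))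
      (fun j => (hP01 j.1 (z n)).1) (fun j => (hP01 j.1 (z n)).2) (hchar n)
      (G.subtype (· ≠ n))
    have heq : ∏ x ∈ G.subtype (· ≠ n), P x.1 (z n) = ∏ j ∈ G, P j (z n) :=
      Finset.prod_subtype_of_mem (fun j => P j (z n)) (fun j hj h => hnG (h ▸ hj))
    exact heq ▸ hfin
  -- choose minimizers of the crossing product on each finite window
  have hex : ∀ N : ℕ, ∃ S ∈ (Finset.range (N+1)).powerset,
      ∀ S' ∈ (Finset.range (N+1)).powerset,
        (∏ j ∈ S, ∏ k ∈ Finset.range (N+1) \ S, w j k) ≤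
          ∏ j ∈ S', ∏ k ∈ Finset.range (N+1) \ S', w j k := fun N =>
    Finset.exists_min_image _ _ ⟨∅, by simp⟩
  choose SN hSNmem hSNmin using hex
  have hSNsub : ∀ N, SN N ⊆ Finset.range (N+1) := fun N => Finset.mem_powerset.1 (hSNmem N)
  -- complement is also a minimizer
  have hfcompl : ∀ N (S' : Finset ℕ), S' ⊆ Finset.range (N+1) →
      (∏ j ∈ Finset.range (N+1) \ S', ∏ k ∈ Finset.range (N+1) \ (Finset.range (N+1) \ S'), w j k)
        = ∏ j ∈ S', ∏ k ∈ Finset.range (N+1) \ S', w j k := by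
    intro N S' hS'
    have h2 : Finset.range (N+1) \ (Finset.range (N+1) \ S') = S' := by
      exact _root_.sdiff_sdiff_eq_self hS'
    rw [h2, Finset.prod_comm]
    exact Finset.prod_congr rfl fun j _ => Finset.prod_congr rfl fun k _ => hsymw k j
  -- the key finite bound
  have key : ∀ N n, n ≤ N →
      (n ∈ SN N → Real.sqrt delta ≤ ∏ j ∈ (SN N).erase n, w j n) ∧
      (n ∉ SN N → Real.sqrt delta ≤ ∏ j ∈ (Finset.range (N+1) \ SN N).erase n, w j n) := by
    intro N n hnN
    have hnT : n ∈ Finset.range (N+1) := Finset.mem_range.2 (Nat.lt_succ_of_le hnN)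
    constructor
    · intro hnS
      exact core_lemma w hsymw delta hδ hrow _ _ (hSNsub N) (hSNmin N) n hnS
    · intro hnS
      refine core_lemma w hsymw delta hδ hrow (Finset.range (N+1)) _ Finset.sdiff_subset
        (fun S' hS' => ?_) n (Finset.mem_sdiff.2 ⟨hnT, hnS⟩)
      rw [hfcompl N (SN N) (hSNsub N)]
      exact hSNmin N S' hS'
  -- ultrafilter extending atTop
  let 𝒰 : Ultrafilter ℕ := Ultrafilter.of atTop
  have hU : (𝒰 : Filter ℕ) ≤ atTop := Ultrafilter.of_le _
  let Sset : Set ℕ := {j | {N | j ∈ SN N} ∈ 𝒰}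
  refine ⟨Sset, ?_, ?_⟩
  · intro n hn
    refine le_tprod_of_le_finprods (fun j : {j : ℕ // j ∈ Sset ∧ j ≠ n} => P j.1 (z n))
      (fun j => (hP01 j.1 (z n)).1) (fun j => (hP01 j.1 (z n)).2) (fun F => ?_)
    set G := F.image Subtype.val with hG
    have hprodeq : ∏ j ∈ G, w j n = ∏ x ∈ F, P x.1 (z n) :=
      Finset.prod_image fun x _ y _ h => Subtype.ext h
    have hGprop : ∀ j ∈ G, {N | j ∈ SN N} ∈ 𝒰 ∧ j ≠ n := by
      intro j hj
      obtain ⟨x, hx, rfl⟩ := Finset.mem_image.1 hj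
      exact ⟨x.2.1, x.2.2⟩
    have hA : ({N | n ∈ SN N} ∩ {N | G.sup id ≤ N ∧ n ≤ N} ∩ ⋂ j ∈ G, {N | j ∈ SN N})
        ∈ (𝒰 : Filter ℕ) := by
      refine Filter.inter_mem (Filter.inter_mem hn (hU ?_)) ?_
      · exact Filter.inter_mem (Filter.mem_atTop _) (Filter.mem_atTop _)
      · exact (Filter.biInter_finset_mem G).2 fun j hj => (hGprop j hj).1
    obtain ⟨N, ⟨⟨hnSN, hsup, hnN⟩, hjSN⟩⟩ := Filter.nonempty_of_mem hA
    have hjSN' : ∀ j ∈ G, j ∈ SN N := by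
      intro j hj
      have := Set.mem_iInter₂.1 hjSN j hj
      exact this
    have hGsub : G ⊆ (SN N).erase n := fun j hj =>
      Finset.mem_erase.2 ⟨(hGprop j hj).2, hjSN' j hj⟩
    calc Real.sqrt delta ≤ ∏ j ∈ (SN N).erase n, w j n := (key N n hnN).1 hnSN
    _ ≤ ∏ j ∈ G, w j n := prod_anti01 (fun j => h0w j n) (fun j => h1w j n) hGsub
    _ = ∏ x ∈ F, P x.1 (z n) := hprodeq
  · intro n hn
    have hn' : {N | n ∉ SN N} ∈ (𝒰 : Filter ℕ) := by
      have := (Ultrafilter.compl_mem_iff_notMem (s := {N | n ∈ SN N}) (f := 𝒰)).2 hn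
      simpa [Set.compl_setOf] using this
    refine le_tprod_of_le_finprods (fun j : {j : ℕ // j ∉ Sset ∧ j ≠ n} => P j.1 (z n))
      (fun j => (hP01 j.1 (z n)).1) (fun j => (hP01 j.1 (z n)).2) (fun F => ?_)
    set G := F.image Subtype.val with hG
    have hprodeq : ∏ j ∈ G, w j n = ∏ x ∈ F, P x.1 (z n) :=
      Finset.prod_image fun x _ y _ h => Subtype.ext h
    have hGprop : ∀ j ∈ G, {N | j ∈ SN N} ∉ (𝒰 : Filter ℕ) ∧ j ≠ n := by
      intro j hj
      obtain ⟨x, hx, rfl⟩ := Finset.mem_image.1 hj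
      exact ⟨x.2.1, x.2.2⟩
    have hA : ({N | n ∉ SN N} ∩ {N | G.sup id ≤ N ∧ n ≤ N} ∩ ⋂ j ∈ G, {N | j ∉ SN N})
        ∈ (𝒰 : Filter ℕ) := by
      refine Filter.inter_mem (Filter.inter_mem hn' (hU ?_)) ?_
      · exact Filter.inter_mem (Filter.mem_atTop _) (Filter.mem_atTop _)
      · refine (Filter.biInter_finset_mem G).2 fun j hj => ?_
        have := (Ultrafilter.compl_mem_iff_notMem (s := {N | j ∈ SN N}) (f := 𝒰)).2
          (hGprop j hj).1
        simpa [Set.compl_setOf] using this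
    obtain ⟨N, ⟨⟨hnSN, hsup, hnN⟩, hjSN⟩⟩ := Filter.nonempty_of_mem hA
    have hjSN' : ∀ j ∈ G, j ∉ SN N := fun j hj => Set.mem_iInter₂.1 hjSN j hj
    have hGsub : G ⊆ (Finset.range (N+1) \ SN N).erase n := by
      intro j hj
      refine Finset.mem_erase.2 ⟨(hGprop j hj).2, Finset.mem_sdiff.2 ⟨?_, hjSN' j hj⟩⟩
      exact Finset.mem_range.2 (Nat.lt_succ_of_le ((Finset.le_sup (f := id) hj).trans hsup))
    calc Real.sqrt delta ≤ ∏ j ∈ (Finset.range (N+1) \ SN N).erase n, w j n :=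
        (key N n hnN).2 hnSN
    _ ≤ ∏ j ∈ G, w j n := prod_anti01 (fun j => h0w j n) (fun j => h1w j n) hGsub
    _ = ∏ x ∈ F, P x.1 (z n) := hprodeq
end
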